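/- arXiv:math/0406373 — 2 statements merged into one kernel-verified Lean document; each statement's English description precedes it below -/
import Mathlib

section
/- Let A be a commutative ring, d ≥ 1, and η₀, ..., η_d ∈ A with η₀² = 2η₀. Suppose ∏_{i=1}^{d}(η₀ + η_i - η₀η_i) = 0 and (2-η₀)·∏_{i=1}^d η_i = 0. Then ∑_{S ⊆ {1,...,d}} (-η₀)^{d-|S|} · ∏_{i∈S} η_i = 0. -/
/-!
Since `η₀² = 2η₀`, the element `u = 1 - η₀` satisfies `u² = 1` and `u η₀ = -η₀`, so each factor
factors as `η₀ + ηᵢ - η₀ηᵢ = u (ηᵢ - η₀)`. Hence the hypothesis says `uᵈ ∏ (ηᵢ - η₀) = 0`, and as `u`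
is a unit, `∏ (ηᵢ - η₀) = 0`; expanding this product over subsets gives the claimed sum.
-/

open Finset

theorem Finset.prod_add_const_eq_sum_powerset {ι R : Type*} [CommSemiring R] [DecidableEq ι]
    (s : Finset ι) (f : ι → R) (c : R) :
    ∏ i ∈ s, (f i + c) = ∑ t ∈ s.powerset, c ^ (#s - #t) * ∏ i ∈ t, f i := by
  rw [prod_add]
  refine sum_congr rfl fun t ht => ?_
  rw [prod_const, card_sdiff_of_subset (mem_powerset.mp ht), mul_comm]

section SqEqTwoMul

variable {A : Type*} [CommRing A] {a : A}

theorem one_sub_mul_self_of_sq_eq_two_mul (h : a ^ 2 = 2 * a) : (1 - a) * a = -a := by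
  linear_combination -h

theorem isUnit_one_sub_of_sq_eq_two_mul (h : a ^ 2 = 2 * a) : IsUnit (1 - a) :=
  IsUnit.of_mul_eq_one (1 - a) (by linear_combination h)

theorem add_sub_mul_eq_one_sub_mul_sub_of_sq_eq_two_mul (h : a ^ 2 = 2 * a) (b : A) :
    a + b - a * b = (1 - a) * (b - a) := by
  linear_combination one_sub_mul_self_of_sq_eq_two_mul h

end SqEqTwoMul

theorem stmt6_general {A : Type*} [CommRing A] (d : ℕ) (η₀ : A) (η : Fin d → A)
    (h₀ : η₀ ^ 2 = 2 * η₀)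
    (hprod : ∏ i : Fin d, (η₀ + η i - η₀ * η i) = 0) :
    ∑ S ∈ (Finset.univ : Finset (Fin d)).powerset,
      (-η₀) ^ (d - S.card) * ∏ i ∈ S, η i = 0 := by
  have hfactor : ∏ i : Fin d, (η₀ + η i - η₀ * η i) = (1 - η₀) ^ d * ∏ i : Fin d, (η i - η₀) := by
    simp only [add_sub_mul_eq_one_sub_mul_sub_of_sq_eq_two_mul h₀, prod_mul_distrib, prod_const,
      card_univ, Fintype.card_fin]
  have hsub : ∏ i : Fin d, (η i - η₀) = 0 :=
    ((isUnit_one_sub_of_sq_eq_two_mul h₀).pow d).mul_right_eq_zero.mp (hfactor ▸ hprod)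
  simpa only [sub_eq_add_neg, prod_add_const_eq_sum_powerset, card_univ, Fintype.card_fin]
    using hsub

theorem stmt6 {A : Type*} [CommRing A] (d : ℕ) (hd : 1 ≤ d) (η₀ : A) (η : Fin d → A)
    (h₀ : η₀ ^ 2 = 2 * η₀)
    (hprod : ∏ i : Fin d, (η₀ + η i - η₀ * η i) = 0)
    (hfour : (2 - η₀) * ∏ i : Fin d, η i = 0) :
    ∑ S ∈ (Finset.univ : Finset (Fin d)).powerset,
      (-η₀) ^ (d - S.card) * ∏ i ∈ S, η i = 0 :=
  stmt6_general d η₀ η h₀ hprod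
end

section
/- Let A and B be commutative rings, f : A → B a ring homomorphism, t : B → A an A-module map satisfying the projection formula, and suppose t(1) = 2 - x for some x ∈ A with x(2-x) = 0 and 2 invertible in A. Then every element α of the kernel of f satisfies α = (1/2)·x·α; in particular ker f ⊆ (x). -/
theorem LinearMap.mul_map_one_eq_zero_of_algebraMap_eq_zero {A B : Type*} [CommSemiring A]
    [Semiring B] [Algebra A B] (t : B →ₗ[A] A) {α : A} (hα : algebraMap A B α = 0) :
    α * t 1 = 0 := by
  rw [← smul_eq_mul, ← map_smul, ← Algebra.algebraMap_eq_smul_one, hα, map_zero]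

theorem eq_invOf_two_mul_of_mul_two_sub_eq_zero {A : Type*} [CommRing A] [Invertible (2 : A)]
    {x α : A} (h : α * (2 - x) = 0) : α = ⅟(2 : A) * (x * α) := by
  have two_mul_eq : 2 * α = x * α := by linear_combination h
  rw [← two_mul_eq, invOf_mul_cancel_left]

theorem stmt8_general {A B : Type*} [CommRing A] [CommRing B] [Algebra A B]
    [Invertible (2 : A)] (t : B →ₗ[A] A) (x : A)
    (ht : t 1 = 2 - x)
    (α : A) (hα : algebraMap A B α = 0) :
    α = ⅟(2 : A) * (x * α) ∧ α ∈ Ideal.span ({x} : Set A) := by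
  have hαx : α = ⅟(2 : A) * (x * α) :=
    eq_invOf_two_mul_of_mul_two_sub_eq_zero (ht ▸ t.mul_map_one_eq_zero_of_algebraMap_eq_zero hα)
  exact ⟨hαx, Ideal.mem_span_singleton'.mpr ⟨⅟(2 : A) * α, by linear_combination -hαx⟩⟩

theorem stmt8 {A B : Type*} [CommRing A] [CommRing B] [Algebra A B]
    [Invertible (2 : A)] (t : B →ₗ[A] A) (x : A)
    (hx : x * (2 - x) = 0) (ht : t 1 = 2 - x)
    (α : A) (hα : algebraMap A B α = 0) :
    α = ⅟(2 : A) * (x * α) ∧ α ∈ Ideal.span ({x} : Set A) :=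
  stmt8_general t x ht α hα
end
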